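/- arXiv:2008.10964 — 4 statements merged into one kernel-verified Lean document; each statement's English description precedes it below -/
import Mathlib

section
/- Let G be a torsion-free commutative-transitive group, let H ⪯ G be an elementarily embedded subgroup, and let h ∈ H with h ≠ 1. Then (1) Z_H(h) = Z_G(h) ∩ H, so Z_H(h) ≤ Z_G(h); and (2) if Z_H(h) has finite index in Z_G(h), then Z_H(h) = Z_G(h). -/
open FirstOrder
open scoped commutatorElement

/-- Function symbols of the first-order language of groups:
one constant (identity), one unary symbol (inversion), one binary symbol (multiplication). -/
def groupFunctions : ℕ → Type
  | 0 => Unit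
  | 1 => Unit
  | 2 => Unit
  | _ => Empty

/-- The first-order language of groups. -/
def groupLang : FirstOrder.Language where
  Functions := groupFunctions
  Relations := fun _ => Empty

/-- Any group is a structure for the language of groups, with the obvious interpretations. -/
instance groupLangStructure (G : Type*) [Group G] : groupLang.Structure G where
  funMap := fun {n} f v =>
    match n, f, v with
    | 0, _, _ => (1 : G)
    | 1, _, v => (v 0)⁻¹
    | 2, _, v => v 0 * v 1
    | _ + 3, f, _ => f.elim
  RelMap := fun {_} r _ => r.elim

/-- A subgroup `H ≤ G` is elementarily embedded if every first-order formula with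
parameters from `H` holds in `H` iff it holds in `G`. -/
def ElemEmbedded {G : Type*} [Group G] (H : Subgroup G) : Prop :=
  ∀ (n : ℕ) (φ : groupLang.Formula (Fin n)) (v : Fin n → H),
    φ.Realize v ↔ φ.Realize (fun i => (v i : G))


/-!
If `Z_H(h)` has finite index in `Z_G(h)`, every `g ∈ Z_G(h)` has a power `g ^ n`, `n ≠ 0`, in `H`.
The sentence "`g ^ n` has an `n`-th root" holds in `G`, so it holds in `H`. In a torsion-free
commutative-transitive group `n`-th roots are unique (two roots both commute with their common
nontrivial `n`-th power), so the root found in `H` is `g` itself.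
-/

namespace Subgroup

variable {G : Type*} [Group G]

theorem map_subtype_centralizer (H : Subgroup G) (s : Set H) :
    (centralizer s).map H.subtype = centralizer (Subtype.val '' s) ⊓ H := by
  ext x
  simp only [mem_map, mem_inf, mem_centralizer_iff, Set.forall_mem_image, coe_subtype]
  constructor
  · rintro ⟨y, hy, rfl⟩
    exact ⟨fun a ha => congrArg Subtype.val (hy a ha), y.2⟩
  · rintro ⟨hx, hxH⟩
    exact ⟨⟨x, hxH⟩, fun a ha => Subtype.ext (hx ha), rfl⟩

end Subgroup

theorem isMulTorsionFree_of_commTransitive {G : Type*} [Group G]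
    (htf : ∀ g : G, g ≠ 1 → ¬IsOfFinOrder g)
    (hct : ∀ x y z : G, y ≠ 1 → ⁅x, y⁆ = 1 → ⁅y, z⁆ = 1 → ⁅x, z⁆ = 1) :
    IsMulTorsionFree G := by
  have eq_one_of_pow {n : ℕ} (hn : n ≠ 0) {a : G} (ha : a ^ n = 1) : a = 1 :=
    not_not.1 fun ha1 => htf a ha1 (isOfFinOrder_iff_pow_eq_one.2 ⟨n, Nat.pos_of_ne_zero hn, ha⟩)
  refine ⟨fun n hn a b (hab : a ^ n = b ^ n) => ?_⟩
  by_cases hb : b = 1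
  · subst hb
    exact eq_one_of_pow hn (hab.trans (one_pow n))
  have hbn : b ^ n ≠ 1 := fun h => hb (eq_one_of_pow hn h)
  have hab_comm : Commute a b := commutatorElement_eq_one_iff_commute.1 <|
    hct a (b ^ n) b hbn
      (commutatorElement_eq_one_iff_commute.2 (hab ▸ (Commute.refl a).pow_right n))
      (commutatorElement_eq_one_iff_commute.2 ((Commute.refl b).pow_left n))
  refine mul_inv_eq_one.1 (eq_one_of_pow hn ?_)
  rw [hab_comm.inv_right.mul_pow, hab, inv_pow, mul_inv_cancel]

namespace groupLang

open Language

def powTerm {α : Type} (t : groupLang.Term α) : ℕ → groupLang.Term α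
  | 0 => Term.func (l := 0) (() : groupLang.Functions 0) ![]
  | n + 1 => Term.func (l := 2) (() : groupLang.Functions 2) ![powTerm t n, t]

@[simp]
theorem realize_powTerm {α : Type} {M : Type*} [Group M] (v : α → M) (t : groupLang.Term α)
    (n : ℕ) : (powTerm t n).realize v = t.realize v ^ n := by
  induction n with
  | zero =>
    rw [pow_zero]
    rfl
  | succ n ih =>
    rw [pow_succ, ← ih]
    rfl

def existsRootFormula (n : ℕ) : groupLang.Formula (Fin 1) :=
  ((powTerm (Term.var (Sum.inr 0)) n).bdEqual (Term.var (Sum.inl 0))).ex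

@[simp]
theorem realize_existsRootFormula {M : Type*} [Group M] (n : ℕ) (v : Fin 1 → M) :
    (existsRootFormula n).Realize v ↔ ∃ x : M, x ^ n = v 0 := by
  simp [existsRootFormula, Formula.Realize, Fin.snoc]

end groupLang

theorem ElemEmbedded.exists_pow_eq {G : Type*} [Group G] {H : Subgroup G} (hH : ElemEmbedded H)
    (n : ℕ) {a : G} (ha : a ∈ H) (hroot : ∃ x : G, x ^ n = a) : ∃ x ∈ H, x ^ n = a := by
  obtain ⟨x, hx⟩ := (groupLang.realize_existsRootFormula n _).1 <|
    (hH 1 (groupLang.existsRootFormula n) fun _ => ⟨a, ha⟩).2 (by simpa using hroot)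
  exact ⟨x, x.2, congrArg Subtype.val hx⟩

theorem centralizer_elemEmbedded_general {G : Type*} [Group G]
    (htf : ∀ g : G, g ≠ 1 → ¬IsOfFinOrder g)
    (hct : ∀ x y z : G, y ≠ 1 → ⁅x, y⁆ = 1 → ⁅y, z⁆ = 1 → ⁅x, z⁆ = 1)
    (H : Subgroup G) (hHG : ElemEmbedded H)
    (h : G) (hhH : h ∈ H) :
    Subgroup.map H.subtype (Subgroup.centralizer {(⟨h, hhH⟩ : H)})
        = Subgroup.centralizer {h} ⊓ H ∧
    ((Subgroup.map H.subtype (Subgroup.centralizer {(⟨h, hhH⟩ : H)})).relIndex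
        (Subgroup.centralizer {h}) ≠ 0 →
      Subgroup.map H.subtype (Subgroup.centralizer {(⟨h, hhH⟩ : H)})
        = Subgroup.centralizer {h}) := by
  have hmap : Subgroup.map H.subtype (Subgroup.centralizer {(⟨h, hhH⟩ : H)})
      = Subgroup.centralizer {h} ⊓ H := by
    rw [Subgroup.map_subtype_centralizer, Set.image_singleton]
  refine ⟨hmap, fun hfin => le_antisymm (hmap.le.trans inf_le_left) fun g hg => ?_⟩
  have := isMulTorsionFree_of_commTransitive htf hct
  obtain ⟨n, hn, -, hgn⟩ := Subgroup.exists_pow_mem_of_relIndex_ne_zero hfin hg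
  have hgnH : g ^ n ∈ H := (hmap ▸ hgn.1).2
  obtain ⟨x, hxH, hx⟩ := hHG.exists_pow_eq n hgnH ⟨g, rfl⟩
  rw [pow_left_inj hn.ne'] at hx
  rw [hmap]
  exact ⟨hg, hx ▸ hxH⟩

/-- Let `G` be a torsion-free commutative-transitive group, `H ⪯ G` elementarily
embedded, and `h ∈ H` nontrivial. Then (1) `Z_H(h) = Z_G(h) ∩ H`, and
(2) if `Z_H(h)` has finite index in `Z_G(h)` then `Z_H(h) = Z_G(h)`. -/
theorem centralizer_elemEmbedded {G : Type*} [Group G]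
    (htf : ∀ g : G, g ≠ 1 → ¬IsOfFinOrder g)
    (hct : ∀ x y z : G, y ≠ 1 → ⁅x, y⁆ = 1 → ⁅y, z⁆ = 1 → ⁅x, z⁆ = 1)
    (H : Subgroup G) (hHG : ElemEmbedded H)
    (h : G) (hhH : h ∈ H) (hne : h ≠ 1) :
    Subgroup.map H.subtype (Subgroup.centralizer {(⟨h, hhH⟩ : H)})
        = Subgroup.centralizer {h} ⊓ H ∧
    ((Subgroup.map H.subtype (Subgroup.centralizer {(⟨h, hhH⟩ : H)})).relIndex
        (Subgroup.centralizer {h}) ≠ 0 →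
      Subgroup.map H.subtype (Subgroup.centralizer {(⟨h, hhH⟩ : H)})
        = Subgroup.centralizer {h}) :=
  centralizer_elemEmbedded_general htf hct H hHG h hhH
end

section
/- For every integer r ≥ 1 there exists a first-order formula Z_r(x) with one free variable in the language of groups such that for every torsion-free commutative-transitive group G in which every abelian subgroup is finitely generated, and for every g ∈ G: G ⊨ Z_r(g) if and only if g ≠ 1 and the centralizer Z_G(g) is a free abelian group of rank r (i.e., isomorphic to ℤʳ). The formula Z_r depends only on r, not on G. -/
open FirstOrder
open scoped commutatorElement

/-- A monoid is torsion-free if no nontrivial element has finite order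
(the definition of `Monoid.IsTorsionFree` in the older Mathlib). -/
def Monoid.IsTorsionFree (G : Type*) [Monoid G] : Prop :=
  ∀ g : G, g ≠ 1 → ¬IsOfFinOrder g

/-!
Commutative transitivity makes the centralizer `C` of `g ≠ 1` abelian; being finitely generated
and torsion-free it is `ℤⁿ` for some `n`, and `n` is read off from the number `2ⁿ` of cosets of
the squares `C²` in `C`. The formula says that `g ≠ 1` and that there are `2ʳ` elements of `C`
forming a transversal of `C²`; squareness in `C` is first-order since `C` is definable from `g`.
-/

open FirstOrder.Language

section SquareClasses

variable {ι H K S : Type*} [Group H] [Group K]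

def IsSquareClassTransversal (f : ι → H) : Prop :=
  (∀ i j, i ≠ j → ¬IsSquare (f i * (f j)⁻¹)) ∧ ∀ y, ∃ i, IsSquare (y * (f i)⁻¹)

theorem MulEquiv.isSquare_apply_iff (e : H ≃* K) {a : H} : IsSquare (e a) ↔ IsSquare a :=
  ⟨fun h => by simpa using h.map e.symm, (·.map e)⟩

theorem MulEquiv.isSquareClassTransversal_comp_iff (e : H ≃* K) (f : ι → H) :
    IsSquareClassTransversal (e ∘ f) ↔ IsSquareClassTransversal f := by
  simp only [IsSquareClassTransversal, Function.comp_apply, ← map_inv, ← map_mul,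
    e.isSquare_apply_iff, e.surjective.forall]

theorem MulEquiv.exists_isSquareClassTransversal_iff (e : H ≃* K) :
    (∃ f : ι → H, IsSquareClassTransversal f) ↔ ∃ f : ι → K, IsSquareClassTransversal f :=
  ⟨fun ⟨f, hf⟩ => ⟨e ∘ f, (e.isSquareClassTransversal_comp_iff f).2 hf⟩,
    fun ⟨f, hf⟩ => ⟨e.symm ∘ f, (e.symm.isSquareClassTransversal_comp_iff f).2 hf⟩⟩

theorem isSquareClassTransversal_iff_bijective {π : H → S} (hπ : Function.Surjective π)
    (hsq : ∀ a b, IsSquare (a * b⁻¹) ↔ π a = π b) (f : ι → H) :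
    IsSquareClassTransversal f ↔ Function.Bijective (π ∘ f) := by
  simp only [IsSquareClassTransversal, hsq]
  refine and_congr ⟨fun h i j hij => by_contra (h i j · hij), fun h i j hne hij => hne (h hij)⟩ ?_
  exact (forall_congr' fun y => exists_congr fun i => eq_comm).trans
    (hπ.forall (p := fun s => ∃ i, π (f i) = s)).symm

theorem exists_isSquareClassTransversal_iff_nonempty_equiv {π : H → S}
    (hπ : Function.Surjective π) (hsq : ∀ a b, IsSquare (a * b⁻¹) ↔ π a = π b) :
    (∃ f : ι → H, IsSquareClassTransversal f) ↔ Nonempty (ι ≃ S) := by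
  simp only [isSquareClassTransversal_iff_bijective hπ hsq]
  refine ⟨fun ⟨f, hf⟩ => ⟨.ofBijective _ hf⟩, fun ⟨e⟩ => ⟨Function.surjInv hπ ∘ e, ?_⟩⟩
  rw [← Function.comp_assoc, (Function.rightInverse_surjInv hπ).comp_eq_id]
  exact e.bijective

theorem Subgroup.exists_isSquareClassTransversal_iff {G : Type*} [Group G] (A : Subgroup G) :
    (∃ f : ι → A, IsSquareClassTransversal f) ↔ ∃ f : ι → G, (∀ i, f i ∈ A) ∧
      (∀ i j, i ≠ j → ∀ w ∈ A, f i * (f j)⁻¹ ≠ w * w) ∧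
        ∀ y ∈ A, ∃ i, ∃ w ∈ A, y * (f i)⁻¹ = w * w := by
  simp only [IsSquareClassTransversal, IsSquare, Subtype.forall, Subtype.exists, Subtype.ext_iff,
    Subgroup.coe_mul, Subgroup.coe_inv, not_exists, not_and, exists_prop]
  exact ⟨fun ⟨f, hf⟩ => ⟨fun i => f i, fun i => (f i).2, hf⟩,
    fun ⟨f, hfA, hf⟩ => ⟨fun i => ⟨f i, hfA i⟩, hf⟩⟩

end SquareClasses

section FreeAbelian

theorem Pi.even_iff {ι : Type*} {α : ι → Type*} [∀ i, Add (α i)] {f : ∀ i, α i} :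
    Even f ↔ ∀ i, Even (f i) := by
  refine ⟨fun ⟨g, hg⟩ i => ⟨g i, congrFun hg i⟩, fun h => ?_⟩
  choose g hg using h
  exact ⟨g, funext hg⟩

theorem Multiplicative.isSquare_mul_inv_iff_intCast_zmod_two {n : ℕ}
    (a b : Multiplicative (Fin n → ℤ)) :
    IsSquare (a * b⁻¹) ↔ (fun j => (a.toAdd j : ZMod 2)) = fun j => (b.toAdd j : ZMod 2) := by
  change Even (a.toAdd - b.toAdd) ↔ _
  simp only [Pi.even_iff, funext_iff, ← ZMod.intCast_eq_zero_iff_even, Pi.sub_apply,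
    Int.cast_sub, sub_eq_zero]

theorem Multiplicative.exists_isSquareClassTransversal_iff {m n : ℕ} :
    (∃ f : Fin m → Multiplicative (Fin n → ℤ), IsSquareClassTransversal f) ↔ m = 2 ^ n := by
  have hπ : Function.Surjective
      fun a : Multiplicative (Fin n → ℤ) => fun j => (a.toAdd j : ZMod 2) :=
    ZMod.intCast_surjective.comp_left.comp Multiplicative.toAdd.surjective
  rw [exists_isSquareClassTransversal_iff_nonempty_equiv hπ isSquare_mul_inv_iff_intCast_zmod_two,
    ← Fintype.card_eq]
  simp [ZMod.card]

theorem Multiplicative.eq_of_mulEquiv_int {n r : ℕ}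
    (e : Multiplicative (Fin n → ℤ) ≃* Multiplicative (Fin r → ℤ)) : n = r := by
  simpa using (AddEquiv.toMultiplicative.symm e).toIntLinearEquiv.finrank_eq

open scoped IsMulCommutative in
theorem exists_mulEquiv_multiplicative_int {H : Type*} [Group H] [IsMulCommutative H]
    [Group.FG H] (htf : Monoid.IsTorsionFree H) :
    ∃ n, Nonempty (H ≃* Multiplicative (Fin n → ℤ)) :=
  have : IsMulTorsionFree H := isMulTorsionFree_iff_not_isOfFinOrder.2 htf
  ⟨_, ⟨AddEquiv.toMultiplicativeRight (Module.finBasis ℤ (Additive H)).equivFun.toAddEquiv⟩⟩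

end FreeAbelian

section Centralizer

variable {G : Type*} [Group G]

theorem Monoid.IsTorsionFree.subgroup (htf : Monoid.IsTorsionFree G) (A : Subgroup G) :
    Monoid.IsTorsionFree A :=
  fun a ha hfin => htf a (by simpa using ha) (Submonoid.isOfFinOrder_coe.2 hfin)

theorem mul_comm_of_mem_centralizer_singleton
    (hct : ∀ x y z : G, y ≠ 1 → ⁅x, y⁆ = 1 → ⁅y, z⁆ = 1 → ⁅x, z⁆ = 1) {g : G} (hg : g ≠ 1)
    {a b : G} (ha : a ∈ Subgroup.centralizer {g}) (hb : b ∈ Subgroup.centralizer {g}) :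
    a * b = b * a := by
  rw [Subgroup.mem_centralizer_singleton_iff] at ha hb
  exact commutatorElement_eq_one_iff_mul_comm.1 <| hct a g b hg
    (commutatorElement_eq_one_iff_mul_comm.2 ha) (commutatorElement_eq_one_iff_mul_comm.2 hb.symm)

end Centralizer

namespace groupLang

variable {α G : Type*} [Group G]

def mulTerm (t₁ t₂ : groupLang.Term α) : groupLang.Term α :=
  Functions.apply₂ (show groupFunctions 2 from ()) t₁ t₂

def invTerm (t : groupLang.Term α) : groupLang.Term α :=
  Functions.apply₁ (show groupFunctions 1 from ()) t

def oneTerm : groupLang.Term α := Constants.term (show groupFunctions 0 from ())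

@[simp] theorem realize_mulTerm (v : α → G) (t₁ t₂ : groupLang.Term α) :
    (mulTerm t₁ t₂).realize v = t₁.realize v * t₂.realize v := rfl

@[simp] theorem realize_invTerm (v : α → G) (t : groupLang.Term α) :
    (invTerm t).realize v = (t.realize v)⁻¹ := rfl

@[simp] theorem realize_oneTerm (v : α → G) : (oneTerm : groupLang.Term α).realize v = 1 := rfl

variable {k : ℕ}

def commutesWithParam (t : groupLang.Term (Fin 1 ⊕ Fin k)) : groupLang.BoundedFormula (Fin 1) k :=
  (mulTerm t (var (Sum.inl 0))).bdEqual (mulTerm (var (Sum.inl 0)) t)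

def isSquareInCentralizer (t : groupLang.Term (Fin 1 ⊕ Fin k)) :
    groupLang.BoundedFormula (Fin 1) k :=
  BoundedFormula.ex (commutesWithParam (var (Sum.inr (Fin.last k))) ⊓
    (t.relabel (Sum.map id Fin.castSucc)).bdEqual
      (mulTerm (var (Sum.inr (Fin.last k))) (var (Sum.inr (Fin.last k)))))

/-- The bound variables `0, …, 2ʳ - 1` are the transversal, `2ʳ` is the element it must cover. -/
noncomputable def centralizerRankFormula (r : ℕ) : groupLang.Formula (Fin 1) :=
  (Term.equal (var 0) oneTerm).not ⊓
  BoundedFormula.exs (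
    (BoundedFormula.iInf fun i : Fin (2 ^ r) => commutesWithParam (var (Sum.inr i))) ⊓
    (BoundedFormula.iInf fun p : {p : Fin (2 ^ r) × Fin (2 ^ r) // p.1 ≠ p.2} =>
      (isSquareInCentralizer (mulTerm (var (Sum.inr p.1.1)) (invTerm (var (Sum.inr p.1.2))))).not) ⊓
    BoundedFormula.all ((commutesWithParam (var (Sum.inr (Fin.last (2 ^ r))))).imp
      (BoundedFormula.iSup fun i : Fin (2 ^ r) =>
        isSquareInCentralizer (mulTerm (var (Sum.inr (Fin.last (2 ^ r))))
          (invTerm (var (Sum.inr i.castSucc)))))))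

theorem realize_centralizerRankFormula (r : ℕ) (g : G) :
    (centralizerRankFormula r).Realize (fun _ => g) ↔
      g ≠ 1 ∧ ∃ f : Fin (2 ^ r) → Subgroup.centralizer {g}, IsSquareClassTransversal f := by
  rw [Subgroup.exists_isSquareClassTransversal_iff]
  simp [centralizerRankFormula, commutesWithParam, isSquareInCentralizer, Fin.snoc_castSucc,
    ← Subgroup.mem_centralizer_singleton_iff, and_assoc]

end groupLang

theorem exists_formula_centralizer_rank_general (r : ℕ) :
    ∃ φ : groupLang.Formula (Fin 1),
      ∀ (G : Type*) [Group G],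
        Monoid.IsTorsionFree G →
        (∀ x y z : G, y ≠ 1 → ⁅x, y⁆ = 1 → ⁅y, z⁆ = 1 → ⁅x, z⁆ = 1) →
        (∀ A : Subgroup G, (∀ a ∈ A, ∀ b ∈ A, a * b = b * a) → A.FG) →
        ∀ g : G,
          (φ.Realize (fun _ => g) ↔
            g ≠ 1 ∧
              Nonempty ((Subgroup.centralizer {g}) ≃* Multiplicative (Fin r → ℤ))) := by
  refine ⟨groupLang.centralizerRankFormula r, fun G _ htf hct hfg g => ?_⟩
  rw [groupLang.realize_centralizerRankFormula]
  refine and_congr_right fun hg => ?_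
  set C := Subgroup.centralizer {g}
  have hcomm {a b : G} (ha : a ∈ C) (hb : b ∈ C) : a * b = b * a :=
    mul_comm_of_mem_centralizer_singleton hct hg ha hb
  have : IsMulCommutative C := .of_comm fun a b => Subtype.ext (hcomm a.2 b.2)
  have : Group.FG C := (Group.fg_iff_subgroup_fg C).2 (hfg C fun a ha b hb => hcomm ha hb)
  obtain ⟨n, ⟨e⟩⟩ := exists_mulEquiv_multiplicative_int (htf.subgroup C)
  rw [e.exists_isSquareClassTransversal_iff, Multiplicative.exists_isSquareClassTransversal_iff,
    (Nat.pow_right_injective le_rfl).eq_iff]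
  exact ⟨fun h => h ▸ ⟨e⟩, fun ⟨e'⟩ => Multiplicative.eq_of_mulEquiv_int (e'.symm.trans e)⟩

/-- For every `r ≥ 1` there is a first-order formula `Z_r(x)` in the language of groups,
depending only on `r`, such that for every torsion-free commutative-transitive group `G`
whose abelian subgroups are all finitely generated and every `g ∈ G`:
`G ⊨ Z_r(g)` iff `g ≠ 1` and the centralizer `Z_G(g)` is free abelian of rank `r`. -/
theorem exists_formula_centralizer_rank (r : ℕ) (hr : 1 ≤ r) :
    ∃ φ : groupLang.Formula (Fin 1),
      ∀ (G : Type*) [Group G],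
        Monoid.IsTorsionFree G →
        (∀ x y z : G, y ≠ 1 → ⁅x, y⁆ = 1 → ⁅y, z⁆ = 1 → ⁅x, z⁆ = 1) →
        (∀ A : Subgroup G, (∀ a ∈ A, ∀ b ∈ A, a * b = b * a) → A.FG) →
        ∀ g : G,
          (φ.Realize (fun _ => g) ↔
            g ≠ 1 ∧
              Nonempty ((Subgroup.centralizer {g}) ≃* Multiplicative (Fin r → ℤ))) :=
  exists_formula_centralizer_rank_general r
end

section
/- Let G be a torsion-free commutative-transitive group in which every abelian subgroup is finitely generated, and let H ⪯ G be an elementarily embedded subgroup. Then for every h ∈ H with h ≠ 1, Z_H(h) = Z_G(h); in particular, Z_G(h) ≤ H. -/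
open FirstOrder
open scoped commutatorElement

/-!
Commutative transitivity makes `Z_G(h)` abelian, so it is a free abelian group `ℤⁿ`, and `Z_H(h)`
embeds in it. Two families of first-order formulas with parameter `h` transfer from `G` to `H`.
A free abelian group of rank `r` has exactly `2ʳ` classes modulo squares, so the `2ⁿ` elements of
`Z_G(h)` pairwise incongruent modulo squares force `Z_H(h)` to have rank `n` as well, and
`Z_G(h) / Z_H(h)` is torsion. The existence in `Z(h)` of `m`-th roots of elements of `H` shows
that `Z_H(h)` is closed under taking roots in the torsion-free group `Z_G(h)`; hence
`Z_H(h) = Z_G(h)`.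
-/

namespace Module.Basis

variable {ι P : Type*} [AddCommGroup P] (b : Basis ι ℤ P)

noncomputable def parity : P →+ (ι → ZMod 2) where
  toFun x i := b.repr x i
  map_zero' := by ext; simp
  map_add' x y := by ext; simp

lemma parity_apply (x : P) (i : ι) : b.parity x i = b.repr x i := rfl

lemma parity_eq_zero_iff (x : P) : b.parity x = 0 ↔ Even x := by
  refine ⟨fun hx => ?_, fun ⟨u, hu⟩ => funext fun i =>
    ZMod.intCast_eq_zero_iff_even.mpr ⟨b.repr u i, by simp [hu]⟩⟩
  have heven (i : ι) : Even (b.repr x i) :=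
    ZMod.intCast_eq_zero_iff_even.mp (congrFun hx i)
  refine ⟨b.repr.symm ((b.repr x).mapRange (· / 2) (Int.zero_ediv 2)), b.repr.injective ?_⟩
  ext i
  simp only [map_add, LinearEquiv.apply_symm_apply, Finsupp.add_apply, Finsupp.mapRange_apply]
  have := Int.two_mul_ediv_two_of_even (heven i)
  omega

lemma parity_surjective [Finite ι] : Function.Surjective b.parity := by
  intro ε
  choose r hr using fun i => ZMod.intCast_surjective (ε i)
  refine ⟨b.equivFun.symm r, funext fun i => ?_⟩
  rw [parity_apply, ← b.equivFun_apply, LinearEquiv.apply_symm_apply, hr]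

end Module.Basis

namespace Module

variable {P : Type*} [AddCommGroup P] [Module.Free ℤ P] [Module.Finite ℤ P]

variable (P) in
lemma exists_pairwise_not_even_sub :
    ∃ x : Fin (2 ^ finrank ℤ P) → P, Pairwise fun i j => ¬Even (x i - x j) := by
  let b := Module.finBasis ℤ P
  let e : (Fin (finrank ℤ P) → ZMod 2) ≃ Fin (2 ^ finrank ℤ P) :=
    Fintype.equivFinOfCardEq (by simp)
  refine ⟨Function.surjInv b.parity_surjective ∘ e.symm, fun i j hij heven => hij ?_⟩
  rw [← b.parity_eq_zero_iff, map_sub, sub_eq_zero] at heven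
  simpa [Function.surjInv_eq] using heven

lemma le_two_pow_finrank_of_pairwise_not_even_sub {k : ℕ} (x : Fin k → P)
    (hx : Pairwise fun i j => ¬Even (x i - x j)) : k ≤ 2 ^ finrank ℤ P := by
  let b := Module.finBasis ℤ P
  have hinj : Function.Injective (b.parity ∘ x) := fun i j hij => by
    by_contra hne
    exact hx hne ((b.parity_eq_zero_iff _).mp (by simpa [sub_eq_zero] using hij))
  simpa using Fintype.card_le_of_injective _ hinj

end Module

lemma Submodule.exists_smul_mem_of_finrank_le {R M : Type*} [CommRing R] [IsDomain R]
    [AddCommGroup M] [Module R M] [Module.Finite R M] (S : Submodule R M)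
    (hS : Module.finrank R M ≤ Module.finrank R S) (x : M) : ∃ a : R, a ≠ 0 ∧ a • x ∈ S := by
  have hquot : Module.finrank R (M ⧸ S) = 0 := by
    have := S.finrank_quotient_add_finrank
    omega
  obtain ⟨a, ha, hax⟩ := Module.finrank_eq_zero_iff.mp hquot (Submodule.Quotient.mk x)
  exact ⟨a, ha, (Submodule.Quotient.mk_eq_zero S).mp (by rwa [Submodule.Quotient.mk_smul])⟩

open Module in
theorem Subgroup.exists_pow_mem_of_pairwise_not_isSquare {B : Type*} [CommGroup B] [Group.FG B]
    [IsMulTorsionFree B] (K : Subgroup B)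
    (hK : ∀ k, (∃ x : Fin k → B, Pairwise fun i j => ¬IsSquare (x i / x j)) →
      ∃ y : Fin k → K, Pairwise fun i j => ¬IsSquare (y i / y j))
    (b : B) : ∃ n : ℕ, n ≠ 0 ∧ b ^ n ∈ K := by
  have : Module.Finite ℤ (Additive B) := Module.Finite.iff_addGroup_fg.mpr inferInstance
  let S : Submodule ℤ (Additive B) := K.toAddSubgroup.toIntSubmodule
  -- `Even` and `•` on `Additive B` and on `S` are `IsSquare` and `^` on `B` and on `K`, by `rfl`.
  obtain ⟨x, hx⟩ := exists_pairwise_not_even_sub (Additive B)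
  obtain ⟨y, hy⟩ := hK _ ⟨x, hx⟩
  have hrank : finrank ℤ (Additive B) ≤ finrank ℤ S :=
    (Nat.pow_le_pow_iff_right one_lt_two).mp
      (le_two_pow_finrank_of_pairwise_not_even_sub (P := S) y hy)
  obtain ⟨a, ha, hab⟩ := S.exists_smul_mem_of_finrank_le hrank (Additive.ofMul b)
  have hba : b ^ a ∈ K := hab
  refine ⟨a.natAbs, Int.natAbs_ne_zero.mpr ha, ?_⟩
  rcases Int.natAbs_eq a with h | h
  · rwa [h, zpow_natCast] at hba
  · rwa [h, zpow_neg, zpow_natCast, inv_mem_iff] at hba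

theorem MonoidHom.surjective_of_exists_pow_mem_range {A B : Type*} [Group A] [Group B]
    [IsMulTorsionFree B] (f : A →* B) (hpow : ∀ b, ∃ n : ℕ, n ≠ 0 ∧ b ^ n ∈ f.range)
    (hroot : ∀ (n : ℕ) (a : A) (b : B), b ^ n = f a → ∃ c, c ^ n = a) :
    Function.Surjective f := by
  intro b
  obtain ⟨n, hn, a, ha⟩ := hpow b
  obtain ⟨c, rfl⟩ := hroot n a b ha.symm
  exact ⟨c, pow_left_injective hn (by simpa using ha)⟩

theorem MonoidHom.surjective_of_pairwise_not_isSquare {A B : Type*} [Group A] [CommGroup B]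
    [Group.FG B] [IsMulTorsionFree B] (f : A →* B) (hf : Function.Injective f)
    (hsq : ∀ k, (∃ x : Fin k → B, Pairwise fun i j => ¬IsSquare (x i / x j)) →
      ∃ y : Fin k → A, Pairwise fun i j => ¬IsSquare (y i / y j))
    (hroot : ∀ (n : ℕ) (a : A) (b : B), b ^ n = f a → ∃ c, c ^ n = a) :
    Function.Surjective f := by
  refine f.surjective_of_exists_pow_mem_range
    (f.range.exists_pow_mem_of_pairwise_not_isSquare fun k hk => ?_) hroot
  obtain ⟨y, hy⟩ := hsq k hk
  let e := MonoidHom.ofInjective hf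
  refine ⟨e ∘ y, fun i j hij hsq => hy hij ?_⟩
  simpa [← map_div] using hsq.map e.symm

lemma Subgroup.isSquare_div_iff {G : Type*} [Group G] {C : Subgroup G} (x y : C) :
    IsSquare (x / y) ↔ ∃ z ∈ C, z * z * y = x := by
  simp only [IsSquare, Subtype.exists, div_eq_iff_eq_mul, Subtype.ext_iff, Subgroup.coe_mul]
  exact exists_congr fun z => by rw [exists_prop, eq_comm]

lemma Subgroup.exists_pairwise_not_isSquare_div_centralizer_iff {G : Type*} [Group G] (g : G)
    (k : ℕ) :
    (∃ x : Fin k → centralizer {g}, Pairwise fun i j => ¬IsSquare (x i / x j)) ↔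
      ∃ x : Fin k → G, (∀ i, Commute (x i) g) ∧
        ∀ i j, i ≠ j → ∀ z, Commute z g → z * z * x j ≠ x i := by
  simp only [Pairwise, isSquare_div_iff, mem_centralizer_singleton_iff, not_exists, not_and]
  constructor
  · rintro ⟨x, hx⟩
    exact ⟨fun i => x i, fun i => mem_centralizer_singleton_iff.mp (x i).2,
      fun i j hij z hz => hx hij z hz⟩
  · rintro ⟨x, hcomm, hsq⟩
    exact ⟨fun i => ⟨x i, mem_centralizer_singleton_iff.mpr (hcomm i)⟩,
      fun i j hij z hz => hsq i j hij z hz⟩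

namespace groupLang

open Language

section Terms

variable {α : Type*}

def one : groupLang.Term α := .func (l := 0) (() : groupFunctions 0) Fin.elim0

def mul (t s : groupLang.Term α) : groupLang.Term α := .func (l := 2) (() : groupFunctions 2) ![t, s]

def pow (t : groupLang.Term α) : ℕ → groupLang.Term α
  | 0 => one
  | n + 1 => mul (pow t n) t

variable {G : Type*} [Group G] (v : α → G)

@[simp] lemma realize_one : (one : groupLang.Term α).realize v = 1 := rfl

@[simp] lemma realize_mul (t s : groupLang.Term α) :
    (mul t s).realize v = t.realize v * s.realize v := rfl

@[simp] lemma realize_pow (t : groupLang.Term α) (n : ℕ) :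
    (pow t n).realize v = t.realize v ^ n := by
  induction n with
  | zero => exact (pow_zero _).symm
  | succ n ih => rw [pow, realize_mul, ih, pow_succ]

end Terms

variable {α : Type*} {n : ℕ}

def commutes (t s : groupLang.Term (α ⊕ Fin n)) : groupLang.BoundedFormula α n :=
  (mul t s).bdEqual (mul s t)

@[simp] lemma realize_commutes {G : Type*} [Group G] (t s : groupLang.Term (α ⊕ Fin n))
    (v : α → G) (xs : Fin n → G) :
    (commutes t s).Realize v xs ↔
      Commute (t.realize (Sum.elim v xs)) (s.realize (Sum.elim v xs)) := by
  simp [commutes, Commute, SemiconjBy]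

/-- `∃ z, z x₀ = x₀ z ∧ zⁿ = x₁`. -/
def rootFormula (n : ℕ) : groupLang.Formula (Fin 2) :=
  (commutes (&0) (.var (.inl 0)) ⊓ (pow (&0) n).bdEqual (.var (.inl 1))).ex

lemma realize_rootFormula {G : Type*} [Group G] (n : ℕ) (v : Fin 2 → G) :
    (rootFormula n).Realize v ↔ ∃ u ∈ Subgroup.centralizer {v 0}, u ^ n = v 1 := by
  simp [rootFormula, Formula.Realize, Subgroup.mem_centralizer_singleton_iff, Commute,
    SemiconjBy, Fin.snoc]

/-- `∃ x₁ … x_k, (⋀ᵢ xᵢ x₀ = x₀ xᵢ) ∧ ⋀_{i ≠ j} ¬∃ z, z x₀ = x₀ z ∧ z z xⱼ = xᵢ`. -/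
noncomputable def squareClassesFormula (k : ℕ) : groupLang.Formula (Fin 1) :=
  ((BoundedFormula.iInf fun i : Fin k => commutes (&i) (.var (.inl 0))) ⊓
    BoundedFormula.iInf fun p : {p : Fin k × Fin k // p.1 ≠ p.2} =>
      ∼(commutes (&(Fin.last k)) (.var (.inl 0)) ⊓
        (mul (mul (&(Fin.last k)) (&(Fin.last k))) (&p.1.2.castSucc)).bdEqual
          (&p.1.1.castSucc)).ex).exs

lemma realize_squareClassesFormula {G : Type*} [Group G] (k : ℕ) (v : Fin 1 → G) :
    (squareClassesFormula k).Realize v ↔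
      ∃ x : Fin k → Subgroup.centralizer {v 0}, Pairwise fun i j => ¬IsSquare (x i / x j) := by
  rw [squareClassesFormula, BoundedFormula.realize_exs,
    Subgroup.exists_pairwise_not_isSquare_div_centralizer_iff]
  simp [BoundedFormula.realize_iInf, Fin.snoc]

end groupLang

namespace ElemEmbedded

open groupLang Subgroup

variable {G : Type*} [Group G] {H : Subgroup G}

lemma exists_pairwise_not_isSquare_div (hH : ElemEmbedded H) {h : G} (hh : h ∈ H) {k : ℕ}
    (hG : ∃ x : Fin k → centralizer {h}, Pairwise fun i j => ¬IsSquare (x i / x j)) :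
    ∃ y : Fin k → centralizer {(⟨h, hh⟩ : H)}, Pairwise fun i j => ¬IsSquare (y i / y j) := by
  have := hH 1 (squareClassesFormula k) fun _ => ⟨h, hh⟩
  rw [realize_squareClassesFormula, realize_squareClassesFormula] at this
  exact this.mpr hG

lemma exists_pow_eq_s6 (hH : ElemEmbedded H) {h : G} (hh : h ∈ H) {n : ℕ}
    (a : centralizer {(⟨h, hh⟩ : H)}) (hG : ∃ u ∈ centralizer {h}, u ^ n = ((a : H) : G)) :
    ∃ c, c ^ n = a := by
  have := hH 2 (rootFormula n) ![⟨h, hh⟩, a]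
  rw [realize_rootFormula, realize_rootFormula] at this
  obtain ⟨u, hu, hun⟩ := this.mpr (by simpa using hG)
  exact ⟨⟨u, hu⟩, Subtype.ext (by simpa using hun)⟩

open scoped IsMulCommutative in
theorem map_subtype_centralizer_singleton (hH : ElemEmbedded H) {h : G} (hh : h ∈ H)
    [IsMulCommutative (centralizer {h})] [Group.FG (centralizer {h})]
    [IsMulTorsionFree (centralizer {h})] :
    (centralizer {(⟨h, hh⟩ : H)}).map H.subtype = centralizer {h} := by
  have hmem (a : centralizer {(⟨h, hh⟩ : H)}) : ((a : H) : G) ∈ centralizer {h} :=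
    mem_centralizer_singleton_iff.mpr (congrArg Subtype.val (mem_centralizer_singleton_iff.mp a.2))
  let ι : centralizer {(⟨h, hh⟩ : H)} →* centralizer {h} :=
    (H.subtype.comp (centralizer _).subtype).codRestrict _ hmem
  have hι : Function.Injective ι := fun a b hab =>
    Subtype.ext (Subtype.ext (congrArg Subtype.val hab :))
  have hsurj := ι.surjective_of_pairwise_not_isSquare hι
    (fun _ => hH.exists_pairwise_not_isSquare_div hh)
    (fun _ a b hb => hH.exists_pow_eq_s6 hh a ⟨b, b.2, congrArg Subtype.val hb⟩)
  ext x
  constructor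
  · rintro ⟨a, ha, rfl⟩
    exact hmem ⟨a, ha⟩
  · intro hx
    obtain ⟨a, ha⟩ := hsurj ⟨x, hx⟩
    exact ⟨a, a.2, congrArg Subtype.val ha⟩

end ElemEmbedded

lemma Subgroup.isMulCommutative_centralizer_singleton {G : Type*} [Group G]
    (hct : ∀ x y z : G, y ≠ 1 → ⁅x, y⁆ = 1 → ⁅y, z⁆ = 1 → ⁅x, z⁆ = 1) {h : G} (hh : h ≠ 1) :
    IsMulCommutative (centralizer {h}) :=
  IsMulCommutative.of_setLike_mul_comm fun a ha b hb =>
    commutatorElement_eq_one_iff_mul_comm.mp <| hct a h b hh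
      (commutatorElement_eq_one_iff_mul_comm.mpr (mem_centralizer_singleton_iff.mp ha))
      (commutatorElement_eq_one_iff_mul_comm.mpr (mem_centralizer_singleton_iff.mp hb).symm)

open scoped IsMulCommutative in
lemma Subgroup.isMulTorsionFree_of_isTorsionFree {G : Type*} [Group G]
    (htf : Monoid.IsTorsionFree G) (K : Subgroup G) [IsMulCommutative K] : IsMulTorsionFree K :=
  IsMulTorsionFree.of_not_isOfFinOrder fun a ha hfin =>
    htf a (fun h1 => ha (Subtype.ext h1)) (Submonoid.isOfFinOrder_coe.mpr hfin)

/-- Let `G` be a torsion-free commutative-transitive group whose abelian subgroups are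
all finitely generated, and let `H ⪯ G` be elementarily embedded. Then for every
nontrivial `h ∈ H` we have `Z_H(h) = Z_G(h)`; in particular `Z_G(h) ≤ H`. -/
theorem centralizer_eq_of_elemEmbedded {G : Type*} [Group G]
    (htf : Monoid.IsTorsionFree G)
    (hct : ∀ x y z : G, y ≠ 1 → ⁅x, y⁆ = 1 → ⁅y, z⁆ = 1 → ⁅x, z⁆ = 1)
    (hfg : ∀ A : Subgroup G, (∀ a ∈ A, ∀ b ∈ A, a * b = b * a) → A.FG)
    (H : Subgroup G) (hHG : ElemEmbedded H) :
    ∀ (h : G) (hhH : h ∈ H), h ≠ 1 →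
      Subgroup.map H.subtype (Subgroup.centralizer {(⟨h, hhH⟩ : H)})
          = Subgroup.centralizer {h} ∧
      Subgroup.centralizer {h} ≤ H := by
  intro h hhH hne
  have := Subgroup.isMulCommutative_centralizer_singleton hct hne
  have : Group.FG (Subgroup.centralizer {h}) := (Group.fg_iff_subgroup_fg _).mpr <|
    hfg _ fun _ ha _ hb => setLike_mul_comm ha hb
  have := Subgroup.isMulTorsionFree_of_isTorsionFree htf (Subgroup.centralizer {h})
  have hmap := hHG.map_subtype_centralizer_singleton hhH
  exact ⟨hmap, hmap ▸ Subgroup.map_subtype_le _⟩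
end

section
/- Let G be a group with a finite generating set S, let r : G → G be an idempotent group homomorphism with image H such that for every s ∈ S either r(s) = s or r(s) = 1, and let S_H = {s ∈ S : r(s) = s}. Then S_H generates H, and for every h ∈ H the word length of h with respect to S_H equals the word length of h with respect to S; that is, the minimal n such that h is a product of n elements of S ∪ S⁻¹ equals the minimal n such that h is a product of n elements of S_H ∪ S_H⁻¹. Consequently, for all a, b ∈ H the word-metric distance between a and b in H with respect to S_H equals their word-metric distance in G with respect to S (H is isometrically embedded in G). -/
/-- The word length of `g` with respect to a generating set `S`: the minimal `n`
such that `g` is a product of `n` elements of `S ∪ S⁻¹`. -/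
noncomputable def wordLength {G : Type*} [Group G] (S : Set G) (g : G) : ℕ :=
  sInf {n : ℕ | ∃ l : List G, l.length = n ∧ (∀ x ∈ l, x ∈ S ∨ x⁻¹ ∈ S) ∧ l.prod = g}

/-!
Since `r` sends `S` into `S_H ∪ {1}`, the image `H = r(⟨S⟩)` is generated by `S_H`.
A word in `S` is pushed through `r` letter by letter: each letter is either kept or sent to `1`,
so `r` maps a word of length `n` representing `g` to a word in `S_H` of length at most `n`
representing `r g`. Since `r` fixes `S_H`, it fixes `H`, and the word length of `h ∈ H` with
respect to `S` is therefore at least that with respect to `S_H`; the converse inequality holds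
because `S_H ⊆ S`.
-/

section WordLength

variable {G : Type*} [Group G]

theorem wordLength_le_length {S : Set G} {l : List G} (hl : ∀ x ∈ l, x ∈ S ∨ x⁻¹ ∈ S) :
    wordLength S l.prod ≤ l.length :=
  Nat.sInf_le ⟨l, rfl, hl, rfl⟩

theorem exists_list_of_mem_subgroupClosure {S : Set G} {g : G} (hg : g ∈ Subgroup.closure S) :
    ∃ l : List G, (∀ x ∈ l, x ∈ S ∨ x⁻¹ ∈ S) ∧ l.prod = g := by
  rw [← Subgroup.mem_toSubmonoid, Subgroup.closure_toSubmonoid] at hg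
  exact Submonoid.exists_list_of_mem_closure hg

theorem exists_list_length_eq_wordLength {S : Set G} {g : G} (hg : g ∈ Subgroup.closure S) :
    ∃ l : List G, l.length = wordLength S g ∧ (∀ x ∈ l, x ∈ S ∨ x⁻¹ ∈ S) ∧ l.prod = g := by
  obtain ⟨l, hl, hprod⟩ := exists_list_of_mem_subgroupClosure hg
  exact Nat.sInf_mem (s := {n | ∃ l : List G, l.length = n ∧ (∀ x ∈ l, x ∈ S ∨ x⁻¹ ∈ S) ∧
    l.prod = g}) ⟨l.length, l, rfl, hl, hprod⟩

theorem wordLength_le_of_subset {S T : Set G} (hST : S ⊆ T) {g : G}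
    (hg : g ∈ Subgroup.closure S) : wordLength T g ≤ wordLength S g := by
  obtain ⟨l, hlen, hl, rfl⟩ := exists_list_length_eq_wordLength hg
  calc wordLength T l.prod ≤ l.length :=
        wordLength_le_length fun x hx => (hl x hx).imp (@hST _) (@hST _)
    _ = wordLength S l.prod := hlen

end WordLength

section Retract

variable {G : Type*} [Group G] {S : Set G} {r : G →* G}

theorem map_eq_self_or_eq_one_of_inv (hS : ∀ s ∈ S, r s = s ∨ r s = 1) {x : G}
    (hx : x ∈ S ∨ x⁻¹ ∈ S) : r x = x ∨ r x = 1 := by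
  rcases hx with hx | hx
  · exact hS x hx
  · simpa only [map_inv, inv_inj, inv_eq_one] using hS _ hx

theorem map_list_prod_eq_prod_filter [DecidableEq G] (hS : ∀ s ∈ S, r s = s ∨ r s = 1)
    {l : List G} (hl : ∀ x ∈ l, x ∈ S ∨ x⁻¹ ∈ S) : r l.prod = (l.filter fun x => r x = x).prod := by
  induction l with
  | nil => simp
  | cons a l ih =>
    rw [List.forall_mem_cons] at hl
    rw [List.prod_cons, map_mul, ih hl.2, List.filter_cons]
    by_cases ha : r a = a
    · simp [ha]
    · have h1 := (map_eq_self_or_eq_one_of_inv hS hl.1).resolve_left ha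
      rw [h1] at ha ⊢
      simp [ha]

theorem range_eq_closure_fixed_of_closure_eq_top (hgen : Subgroup.closure S = ⊤)
    (hS : ∀ s ∈ S, r s = s ∨ r s = 1) :
    r.range = Subgroup.closure {s | s ∈ S ∧ r s = s} := by
  rw [MonoidHom.range_eq_map, ← hgen, MonoidHom.map_closure]
  refine le_antisymm (Subgroup.closure_le _ |>.2 ?_) (Subgroup.closure_mono ?_)
  · rintro _ ⟨s, hs, rfl⟩
    rcases hS s hs with h | h
    · rw [h]
      exact Subgroup.subset_closure ⟨hs, h⟩
    · rw [h]
      exact one_mem _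
  · rintro s ⟨hs, h⟩
    exact ⟨s, hs, h⟩

theorem wordLength_fixed_eq (hS : ∀ s ∈ S, r s = s ∨ r s = 1) {h : G}
    (hh : h ∈ Subgroup.closure {s | s ∈ S ∧ r s = s}) :
    wordLength {s | s ∈ S ∧ r s = s} h = wordLength S h := by
  classical
  have hfix : r h = h :=
    MonoidHom.eqOn_closure (f := r) (g := MonoidHom.id G) (fun s hs => hs.2) hh
  refine le_antisymm ?_ (wordLength_le_of_subset (fun s hs => hs.1) hh)
  obtain ⟨l, hlen, hl, rfl⟩ :=
    exists_list_length_eq_wordLength (Subgroup.closure_mono (fun s hs => hs.1) hh)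
  have hword : ∀ x ∈ l.filter (fun x => r x = x),
      x ∈ {s | s ∈ S ∧ r s = s} ∨ x⁻¹ ∈ {s | s ∈ S ∧ r s = s} := by
    intro x hx
    obtain ⟨hxl, hrx⟩ := List.mem_filter.1 hx
    have hrx : r x = x := of_decide_eq_true hrx
    exact (hl x hxl).imp (fun hxS => ⟨hxS, hrx⟩) (fun hxS => ⟨hxS, by rw [map_inv, hrx]⟩)
  calc wordLength {s | s ∈ S ∧ r s = s} l.prod
      = wordLength {s | s ∈ S ∧ r s = s} (l.filter fun x => r x = x).prod := by
        rw [← map_list_prod_eq_prod_filter hS hl, hfix]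
    _ ≤ (l.filter fun x => r x = x).length := wordLength_le_length hword
    _ ≤ l.length := List.length_filter_le _ _
    _ = wordLength S l.prod := hlen

end Retract

theorem retract_isometrically_embedded_general {G : Type*} [Group G]
    (S : Finset G) (hgen : Subgroup.closure (S : Set G) = ⊤)
    (r : G →* G)
    (hS : ∀ s ∈ S, r s = s ∨ r s = 1) :
    Subgroup.closure {s : G | s ∈ S ∧ r s = s} = r.range ∧
    (∀ h ∈ r.range,
      wordLength {s : G | s ∈ S ∧ r s = s} h = wordLength (S : Set G) h) ∧
    (∀ a ∈ r.range, ∀ b ∈ r.range,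
      wordLength {s : G | s ∈ S ∧ r s = s} (a⁻¹ * b)
        = wordLength (S : Set G) (a⁻¹ * b)) := by
  have hrange := range_eq_closure_fixed_of_closure_eq_top (r := r) hgen hS
  have hword : ∀ h ∈ r.range,
      wordLength {s : G | s ∈ S ∧ r s = s} h = wordLength (S : Set G) h :=
    fun h hh => wordLength_fixed_eq (S := (S : Set G)) hS (hrange ▸ hh)
  exact ⟨hrange.symm, hword,
    fun a ha b hb => hword _ (r.range.mul_mem (r.range.inv_mem ha) hb)⟩

/-- Let `G` be generated by a finite set `S`, and let `r : G → G` be an idempotent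
endomorphism with image `H` such that every `s ∈ S` satisfies `r(s) = s` or `r(s) = 1`.
Then `S_H = {s ∈ S : r(s) = s}` generates `H`, every `h ∈ H` has the same word length
with respect to `S_H` as with respect to `S`, and consequently the word metrics agree:
`H` is isometrically embedded in `G`. -/
theorem retract_isometrically_embedded {G : Type*} [Group G]
    (S : Finset G) (hgen : Subgroup.closure (S : Set G) = ⊤)
    (r : G →* G) (hidem : r.comp r = r)
    (hS : ∀ s ∈ S, r s = s ∨ r s = 1) :
    Subgroup.closure {s : G | s ∈ S ∧ r s = s} = r.range ∧
    (∀ h ∈ r.range,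
      wordLength {s : G | s ∈ S ∧ r s = s} h = wordLength (S : Set G) h) ∧
    (∀ a ∈ r.range, ∀ b ∈ r.range,
      wordLength {s : G | s ∈ S ∧ r s = s} (a⁻¹ * b)
        = wordLength (S : Set G) (a⁻¹ * b)) :=
  retract_isometrically_embedded_general S hgen r hS
end
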